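/- arXiv:1710.08084 — 2 statements merged into one kernel-verified Lean document; each statement's English description precedes it below -/
import Mathlib

section
/- Let V ⊂ ℝ^{n+1} be a proper convex cone, and let x₀ be in the interior of V and y₀ be in the interior of V* with ⟨x₀, y₀⟩ = −1. Then s_{x₀}(K_{y₀}) = s_{y₀}(T_{x₀}) = (1/(n!)²) · (∫_V e^{⟨x, y₀⟩} dx) · (∫_{V*} e^{⟨x₀, y⟩} dy), where K_{y₀} = {x ∈ V : ⟨x, y₀⟩ = −1} and T_{x₀} = {y ∈ V* : ⟨x₀, y⟩ = −1}. -/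
/-!
The map `Φ x = (-⟪x, y₀⟫, A.linear (x + ⟪x, y₀⟫ • x₀))` is a linear isomorphism
`ℝⁿ⁺¹ ≃ ℝ × ℝⁿ` carrying `V \ {0}` onto the cone `{(t, u) | 0 < t, u ∈ t • K}` over
`K = A '' K_{y₀}`, and `⟪x, y₀⟫ = -t` there. By Fubini and `∫₀^∞ e^{-t} tⁿ dt = n!`,
`∫_V e^{⟪x, y₀⟫} dx = n! vol K / |det Φ|`. The coordinates `Φ' = J ∘ (Φ⁻¹)^*`, with `J` flipping
the sign of `t`, turn the pairing `⟪x, y⟫` into the Lorentz form `⟪u, w⟫ - t s`; so `Φ'` carries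
`V* \ {0}` onto the cone over the polar `K°`, with `⟪x₀, y⟫ = -s`, and
`∫_{V*} e^{⟪x₀, y⟫} dy = n! vol K° / |det Φ'| = n! vol K° |det Φ|`. Multiplying gives the first
identity; the second is the first one for `V*`, since `V** = V`.
-/

open MeasureTheory Set Pointwise

noncomputable section

abbrev Euc (d : ℕ) := EuclideanSpace ℝ (Fin d)

def polarSet {d : ℕ} (K : Set (Euc d)) : Set (Euc d) :=
  {y | ∀ x ∈ K, (inner ℝ x y : ℝ) ≤ 1}

def mahlerVol {d : ℕ} (K : Set (Euc d)) : ℝ :=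
  (volume K).toReal * (volume (polarSet K)).toReal

def covM {d : ℕ} (K : Set (Euc d)) : Matrix (Fin d) (Fin d) ℝ :=
  Matrix.of fun i j =>
    (∫ x in K, x i * x j) / (volume K).toReal -
      ((∫ x in K, x i) / (volume K).toReal) * ((∫ x in K, x j) / (volume K).toReal)

def isoConst {d : ℕ} (K : Set (Euc d)) : ℝ :=
  ((covM K).det / (volume K).toReal ^ 2) ^ (1 / (2 * (d : ℝ)))

def simplexIso (n : ℕ) : ℝ :=
  (n.factorial : ℝ) ^ ((n : ℝ)⁻¹) /
    (((n : ℝ) + 1) ^ (((n : ℝ) + 1) / (2 * (n : ℝ))) * Real.sqrt ((n : ℝ) + 2))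

def barycenterE {d : ℕ} (K : Set (Euc d)) : Euc d :=
  (volume K).toReal⁻¹ • ∫ x in K, x

def IsProperCone {d : ℕ} (V : Set (Euc d)) : Prop :=
  IsClosed V ∧ Convex ℝ V ∧ (∀ x ∈ V, ∀ t : ℝ, 0 ≤ t → t • x ∈ V) ∧
    (interior V).Nonempty ∧ ∀ x ∈ V, -x ∈ V → x = 0

def dualConeSet {d : ℕ} (V : Set (Euc d)) : Set (Euc d) :=
  {y | ∀ x ∈ V, (inner ℝ x y : ℝ) ≤ 0}

def logLaplace {d : ℕ} (V : Set (Euc d)) (y : Euc d) : ℝ :=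
  Real.log (∫ x in V, Real.exp ((inner ℝ x y : ℝ)))

def legendreLL {d : ℕ} (V : Set (Euc d)) (x : Euc d) : ℝ :=
  sSup {z : ℝ | ∃ y ∈ interior (dualConeSet V), z = (inner ℝ x y : ℝ) - logLaplace V y}

def IsChart {d n : ℕ} (K : Set (Euc d)) (p : Euc d) (A : Euc d →ᵃ[ℝ] Euc n) : Prop :=
  Set.InjOn A (affineSpan ℝ K : Set (Euc d)) ∧
    A '' (affineSpan ℝ K : Set (Euc d)) = Set.univ ∧ A p = 0

def sbarTo (n : ℕ) {d : ℕ} (K : Set (Euc d)) : ℝ :=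
  sInf {s | ∃ p ∈ intrinsicInterior ℝ K, ∃ A : Euc d →ᵃ[ℝ] Euc n,
    IsChart K p A ∧ s = mahlerVol (A '' K)}

def baryH (r : ℝ) {d : ℕ} (K : Set (Euc d)) : Euc d :=
  ((μH[r] K).toReal)⁻¹ • ∫ x in K, x ∂(μH[r])

def covH (r : ℝ) {d : ℕ} (K : Set (Euc d)) : Matrix (Fin d) (Fin d) ℝ :=
  Matrix.of fun i j =>
    (∫ x in K, x i * x j ∂(μH[r])) / (μH[r] K).toReal - baryH r K i * baryH r K j

def hessM {d : ℕ} (f : Euc d → ℝ) (x : Euc d) : Matrix (Fin d) (Fin d) ℝ :=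
  Matrix.of fun i j =>
    iteratedFDeriv ℝ 2 f x ![EuclideanSpace.single i 1, EuclideanSpace.single j 1]

def detMinors {d : ℕ} (A : Matrix (Fin (d + 1)) (Fin (d + 1)) ℝ) : ℝ :=
  ∑ i : Fin (d + 1), (A.submatrix (Fin.succAbove i) (Fin.succAbove i)).det

def isoH (n : ℕ) (K : Set (Euc (n + 1))) : ℝ :=
  (detMinors (covH n K) / (μH[n] K).toReal ^ 2) ^ (1 / (2 * (n : ℝ)))

namespace ConeMahler

open scoped RealInnerProductSpace
open Filter Topology

variable {d n : ℕ}

lemma affineSpan_inter_eq {E : Type*} [NormedAddCommGroup E] [NormedSpace ℝ E] {s : Set E}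
    {H : AffineSubspace ℝ E} {p : E} (hp : p ∈ interior s) (hpH : p ∈ H) :
    affineSpan ℝ (s ∩ H) = H := by
  refine le_antisymm (affineSpan_le.2 inter_subset_right) fun h hh => ?_
  have hnear : ∀ᶠ c in 𝓝[>] (0 : ℝ), AffineMap.lineMap p h c ∈ s := by
    have := AffineMap.lineMap_continuous.tendsto' (0 : ℝ) p (AffineMap.lineMap_apply_zero p h)
    exact (this.eventually (mem_interior_iff_mem_nhds.1 hp)).filter_mono nhdsWithin_le_nhds
  obtain ⟨c, hcs, hc⟩ := (hnear.and self_mem_nhdsWithin).exists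
  have hp' : p ∈ affineSpan ℝ (s ∩ H) := subset_affineSpan _ _ ⟨interior_subset hp, hpH⟩
  have hq : AffineMap.lineMap p h c ∈ affineSpan ℝ (s ∩ H) :=
    subset_affineSpan _ _ ⟨hcs, AffineMap.lineMap_mem c hpH hh⟩
  -- `h` lies on the line through `p` and `lineMap p h c`, at parameter `c⁻¹`
  convert AffineMap.lineMap_mem c⁻¹ hp' hq
  rw [AffineMap.lineMap_apply, AffineMap.lineMap_vsub_left, smul_smul,
    inv_mul_cancel₀ (ne_of_gt hc), one_smul, vsub_vadd]

section InnerProductSpace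

variable {E : Type*} [NormedAddCommGroup E] [InnerProductSpace ℝ E]

lemma inner_neg_of_mem_interior {s : Set E} {p y : E} (hp : p ∈ interior s)
    (hs : ∀ x ∈ s, ⟪x, y⟫ ≤ 0) (hy : y ≠ 0) : ⟪p, y⟫ < 0 := by
  have hnear : ∀ᶠ t in 𝓝[>] (0 : ℝ), p + t • y ∈ s := by
    have := (by fun_prop : Continuous fun t : ℝ => p + t • y).tendsto' 0 p (by simp)
    exact (this.eventually (mem_interior_iff_mem_nhds.1 hp)).filter_mono nhdsWithin_le_nhds
  obtain ⟨t, hts, ht⟩ := (hnear.and self_mem_nhdsWithin).exists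
  have h := hs _ hts
  rw [inner_add_left, real_inner_smul_left, real_inner_self_eq_norm_sq] at h
  have : 0 < t * ‖y‖ ^ 2 := mul_pos ht (pow_pos (norm_pos_iff.2 hy) 2)
  linarith

lemma det_adjoint [FiniteDimensional ℝ E] (f : E →ₗ[ℝ] E) :
    LinearMap.det (LinearMap.adjoint f) = LinearMap.det f := by
  let b := stdOrthonormalBasis ℝ E
  rw [← LinearMap.det_toMatrix b.toBasis, ← LinearMap.det_toMatrix b.toBasis f,
    LinearMap.toMatrix_adjoint, Matrix.det_conjTranspose, star_trivial]

variable {F : Type*} [AddCommGroup F] [Module ℝ F]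

def coneCoords (A : E →ᵃ[ℝ] F) (x₀ y₀ : E) : E →ₗ[ℝ] ℝ × F where
  toFun x := (-⟪x, y₀⟫, A.linear (x + ⟪x, y₀⟫ • x₀))
  map_add' x y := by
    ext
    · simp [inner_add_left]; ring
    · simp [inner_add_left, add_smul]; abel
  map_smul' c x := by
    ext
    · simp [real_inner_smul_left]
    · simp [real_inner_smul_left, mul_smul]

@[simp] lemma coneCoords_fst (A : E →ᵃ[ℝ] F) (x₀ y₀ x : E) :
    (coneCoords A x₀ y₀ x).1 = -⟪x, y₀⟫ := rfl

lemma coneCoords_smul {A : E →ᵃ[ℝ] F} {x₀ y₀ k : E} (hA : A x₀ = 0) (hk : ⟪k, y₀⟫ = -1) (t : ℝ) :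
    coneCoords A x₀ y₀ (t • k) = (t, t • A k) := by
  have h := A.linearMap_vsub k x₀
  simp only [vsub_eq_sub, hA, sub_zero] at h
  ext
  · simp [hk]
  · simp [coneCoords, hk, ← h, sub_eq_add_neg]

end InnerProductSpace

lemma isClosed_dualConeSet (V : Set (Euc d)) : IsClosed (dualConeSet V) := by
  rw [show dualConeSet V = ⋂ x ∈ V, {y | ⟪x, y⟫ ≤ 0} by ext; simp [dualConeSet]]
  exact isClosed_biInter fun x _ => isClosed_le (by fun_prop) continuous_const

lemma smul_mem_dualConeSet {V : Set (Euc d)} {y : Euc d} (hy : y ∈ dualConeSet V) {t : ℝ}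
    (ht : 0 ≤ t) : t • y ∈ dualConeSet V := fun x hx => by
  rw [real_inner_smul_right]
  exact mul_nonpos_of_nonneg_of_nonpos ht (hy x hx)

lemma dualConeSet_dualConeSet {V : Set (Euc d)} (hcl : IsClosed V) (hconv : Convex ℝ V)
    (hcone : ∀ x ∈ V, ∀ t : ℝ, 0 ≤ t → t • x ∈ V) (hne : V.Nonempty) :
    dualConeSet (dualConeSet V) = V := by
  have h0 : (0 : Euc d) ∈ V := by
    obtain ⟨x, hx⟩ := hne
    simpa using hcone x hx 0 le_rfl
  let C : ProperCone ℝ (Euc d) :=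
    { carrier := V
      add_mem' := fun {x y} hx hy => by
        have := hcone _ (hconv hx hy (by norm_num : (0 : ℝ) ≤ 1 / 2) (by norm_num : (0 : ℝ) ≤ 1 / 2)
          (by norm_num)) 2 (by norm_num)
        rwa [smul_add, smul_smul, smul_smul, show (2 : ℝ) * (1 / 2) = 1 by norm_num,
          one_smul, one_smul] at this
      zero_mem' := h0
      smul_mem' := fun c x hx => hcone x hx c c.2
      isClosed' := hcl }
  ext z
  refine ⟨fun hz => ?_, fun hz y hy => real_inner_comm y z ▸ hy z hz⟩
  by_contra hzV
  obtain ⟨y, hy, hzy⟩ := ProperCone.hyperplane_separation' C hzV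
  have := hz (-y) fun x hx => by rw [inner_neg_right]; linarith [hy x hx]
  rw [inner_neg_left, real_inner_comm] at this
  linarith

lemma isClosed_polarSet (S : Set (Euc n)) : IsClosed (polarSet S) := by
  rw [show polarSet S = ⋂ x ∈ S, {y | ⟪x, y⟫ ≤ 1} by ext; simp [polarSet]]
  exact isClosed_biInter fun x _ => isClosed_le (by fun_prop) continuous_const

def coneOver (S : Set (Euc n)) : Set (ℝ × Euc n) := {p | 0 < p.1 ∧ p.2 ∈ p.1 • S}

lemma mem_coneOver {S : Set (Euc n)} {p : ℝ × Euc n} :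
    p ∈ coneOver S ↔ 0 < p.1 ∧ p.1⁻¹ • p.2 ∈ S :=
  and_congr_right fun h => mem_smul_set_iff_inv_smul_mem₀ h.ne' _ _

lemma measurableSet_coneOver {S : Set (Euc n)} (hS : MeasurableSet S) :
    MeasurableSet (coneOver S) := by
  have : coneOver S = {p | 0 < p.1} ∩ (fun p : ℝ × Euc n => p.1⁻¹ • p.2) ⁻¹' S := by
    ext p; exact mem_coneOver
  rw [this]
  exact (measurableSet_lt measurable_const measurable_fst).inter
    ((measurable_fst.inv.smul measurable_snd) hS)

lemma lintegral_exp_neg_mul_pow (n : ℕ) :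
    ∫⁻ t in Ioi (0 : ℝ), ENNReal.ofReal (Real.exp (-t) * t ^ n) = n.factorial := by
  have hpow : ∀ t : ℝ, Real.exp (-t) * t ^ n = Real.exp (-t) * t ^ ((n + 1 : ℝ) - 1) := by
    intro t; rw [add_sub_cancel_right, Real.rpow_natCast]
  simp_rw [hpow]
  rw [← ofReal_integral_eq_lintegral_ofReal (Real.GammaIntegral_convergent (by positivity))
      ((ae_restrict_iff' measurableSet_Ioi).2 (ae_of_all _ fun t ht =>
        mul_nonneg (Real.exp_nonneg _) (Real.rpow_nonneg (le_of_lt ht) _))),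
    ← Real.Gamma_eq_integral (by positivity), Real.Gamma_nat_eq_factorial, ENNReal.ofReal_natCast]

lemma volume_slice_coneOver (S : Set (Euc n)) (t : ℝ) :
    volume (Prod.mk t ⁻¹' coneOver S) =
      (Ioi 0).indicator (fun t => ENNReal.ofReal (t ^ n) * volume S) t := by
  by_cases ht : 0 < t
  · have : Prod.mk t ⁻¹' coneOver S = t • S := by ext u; simp [coneOver, ht]
    rw [this, Measure.addHaar_smul_of_nonneg _ ht.le, finrank_euclideanSpace_fin,
      indicator_of_mem (show t ∈ Ioi 0 from ht)]
  · have : Prod.mk t ⁻¹' coneOver S = ∅ := by ext u; simp [coneOver, ht]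
    rw [this, measure_empty, indicator_of_notMem (show t ∉ Ioi 0 from ht)]

lemma lintegral_exp_neg_coneOver {S : Set (Euc n)} (hS : MeasurableSet S) :
    ∫⁻ p in coneOver S, ENNReal.ofReal (Real.exp (-p.1)) = n.factorial * volume S := by
  have hf : Measurable fun t : ℝ => ENNReal.ofReal (Real.exp (-t)) := by fun_prop
  have hC := measurableSet_coneOver hS
  rw [← withDensity_apply _ hC, Measure.volume_eq_prod, ← prod_withDensity_left hf,
    Measure.prod_apply hC,
    lintegral_withDensity_eq_lintegral_mul _ hf (measurable_measure_prodMk_left hC)]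
  simp only [volume_slice_coneOver, Pi.mul_apply,
    ← indicator_mul_right (Ioi 0) fun t : ℝ => ENNReal.ofReal (Real.exp (-t))]
  rw [lintegral_indicator measurableSet_Ioi]
  simp_rw [← mul_assoc, ← ENNReal.ofReal_mul (Real.exp_nonneg _)]
  rw [lintegral_mul_const _ (by fun_prop), lintegral_exp_neg_mul_pow]

def splitHead (n : ℕ) : Euc (n + 1) ≃ₗ[ℝ] ℝ × Euc n where
  toFun x := (x 0, WithLp.toLp 2 fun j => x j.succ)
  invFun p := WithLp.toLp 2 (Fin.cons p.1 (WithLp.ofLp p.2))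
  map_add' x y := rfl
  map_smul' c x := rfl
  left_inv x := by ext i; cases i using Fin.cases <;> simp
  right_inv p := by simp

@[simp] lemma splitHead_fst (x : Euc (n + 1)) : (splitHead n x).1 = x 0 := rfl

@[simp] lemma splitHead_snd (x : Euc (n + 1)) (j : Fin n) : (splitHead n x).2 j = x j.succ := rfl

lemma measurePreserving_splitHead : MeasurePreserving (splitHead n) := by
  have h := ((MeasurePreserving.id volume).prod (PiLp.volume_preserving_toLp (Fin n))).comp
    ((volume_preserving_piFinSuccAbove (fun _ : Fin (n + 1) => ℝ) 0).comp
      (PiLp.volume_preserving_ofLp (Fin (n + 1))))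
  rw [← Measure.volume_eq_prod] at h
  convert h using 1
  funext x
  ext j <;> simp [Fin.tail]

lemma inner_eq_splitHead (x y : Euc (n + 1)) :
    ⟪x, y⟫ = (splitHead n x).1 * (splitHead n y).1 + ⟪(splitHead n x).2, (splitHead n y).2⟫ := by
  simp [PiLp.inner_apply, Fin.sum_univ_succ, mul_comm]

def coordDet (Φ : Euc (n + 1) →ₗ[ℝ] ℝ × Euc n) : ℝ :=
  LinearMap.det ((splitHead n).symm.toLinearMap ∘ₗ Φ)

lemma coordDet_ne_zero (Φ : Euc (n + 1) ≃ₗ[ℝ] ℝ × Euc n) : coordDet Φ.toLinearMap ≠ 0 := by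
  rw [coordDet, ← LinearEquiv.coe_trans]
  exact (LinearEquiv.isUnit_det' _).ne_zero

lemma map_volume_eq_smul (Φ : Euc (n + 1) →ₗ[ℝ] ℝ × Euc n) (hΦ : coordDet Φ ≠ 0) :
    Measure.map Φ volume = ENNReal.ofReal |coordDet Φ|⁻¹ • volume := by
  have hΦ' : ⇑Φ = splitHead n ∘ ((splitHead n).symm.toLinearMap ∘ₗ Φ) := by
    funext x; simp
  rw [hΦ', ← Measure.map_map (measurePreserving_splitHead.measurable)
      (LinearMap.continuous_of_finiteDimensional _).measurable,
    Measure.map_linearMap_addHaar_eq_smul_addHaar _ hΦ, Measure.map_smul,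
    measurePreserving_splitHead.map_eq, abs_inv, coordDet]

lemma integral_exp_neg_preimage_coneOver (Φ : Euc (n + 1) →ₗ[ℝ] ℝ × Euc n)
    (hΦ : coordDet Φ ≠ 0) {S : Set (Euc n)} (hS : MeasurableSet S) :
    ∫ x in Φ ⁻¹' coneOver S, Real.exp (-(Φ x).1) =
      |coordDet Φ|⁻¹ * (n.factorial * (volume S).toReal) := by
  rw [← setIntegral_map (f := fun p : ℝ × Euc n => Real.exp (-p.1)) (measurableSet_coneOver hS)
      (by fun_prop)
      (LinearMap.continuous_of_finiteDimensional Φ).aemeasurable, map_volume_eq_smul Φ hΦ,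
    Measure.restrict_smul, integral_smul_measure,
    integral_eq_lintegral_of_nonneg_ae (ae_of_all _ fun _ => (Real.exp_pos _).le) (by fun_prop),
    lintegral_exp_neg_coneOver hS]
  simp [ENNReal.toReal_ofReal (inv_nonneg.2 (abs_nonneg _))]

lemma exists_lorentzDual (Φ : Euc (n + 1) ≃ₗ[ℝ] ℝ × Euc n) :
    ∃ Φ' : Euc (n + 1) →ₗ[ℝ] ℝ × Euc n,
      (∀ x y, ⟪x, y⟫ = ⟪(Φ x).2, (Φ' y).2⟫ - (Φ x).1 * (Φ' y).1) ∧
        |coordDet Φ.toLinearMap| * |coordDet Φ'| = 1 := by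
  set Ψ := Φ.trans (splitHead n).symm
  set Ψinv : Euc (n + 1) →ₗ[ℝ] Euc (n + 1) := Ψ.symm.toLinearMap
  set J : ℝ × Euc n →ₗ[ℝ] ℝ × Euc n := LinearMap.prodMap (-LinearMap.id) LinearMap.id
  set Φ' := J ∘ₗ (splitHead n).toLinearMap ∘ₗ LinearMap.adjoint Ψinv
  refine ⟨Φ', fun x y => ?_, ?_⟩
  · have hx : Φ x = splitHead n (Ψ x) := by simp [Ψ]
    calc ⟪x, y⟫ = ⟪Ψinv (Ψ x), y⟫ := by simp [Ψinv]
      _ = ⟪Ψ x, LinearMap.adjoint Ψinv y⟫ := (LinearMap.adjoint_inner_right _ _ _).symm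
      _ = _ := by rw [inner_eq_splitHead, hx]; simp [Φ', J]; ring
  · have hJ : LinearMap.det ((splitHead n).symm.toLinearMap ∘ₗ J ∘ₗ (splitHead n).toLinearMap) =
        -1 := by
      have := LinearMap.det_conj J (splitHead n).symm
      rw [LinearEquiv.symm_symm] at this
      rw [this]
      simp [J, LinearMap.det_prodMap]
    have hΨ : LinearMap.det (Ψ : Euc (n + 1) →ₗ[ℝ] Euc (n + 1)) * LinearMap.det Ψinv = 1 := by
      rw [← LinearMap.det_comp, ← LinearEquiv.coe_trans, LinearEquiv.symm_trans_self]
      exact LinearMap.det_id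
    have : coordDet Φ' = -LinearMap.det Ψinv := by
      rw [coordDet, ← LinearMap.comp_assoc, ← LinearMap.comp_assoc, LinearMap.det_comp,
        LinearMap.comp_assoc, hJ, det_adjoint, neg_one_mul]
    rw [this, coordDet, ← LinearEquiv.coe_trans, abs_neg, ← abs_mul, hΨ, abs_one]

lemma _root_.IsChart.eq_zero_of_linear_eq_zero {V : Set (Euc d)} {x₀ y₀ : Euc d}
    {A : Euc d →ᵃ[ℝ] Euc n}
    (hA : IsChart {x ∈ V | ⟪x, y₀⟫ = -1} x₀ A) (hx₀ : x₀ ∈ interior V) (hxy : ⟪x₀, y₀⟫ = -1)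
    {v : Euc d} (hv : ⟪v, y₀⟫ = 0) (hAv : A.linear v = 0) : v = 0 := by
  set H := AffineSubspace.mk' x₀ (LinearMap.ker (innerₛₗ ℝ y₀))
  have hmemH (x : Euc d) : x ∈ H ↔ ⟪x, y₀⟫ = -1 := by
    rw [AffineSubspace.mem_mk', LinearMap.mem_ker, innerₛₗ_apply_apply, real_inner_comm,
      vsub_eq_sub, inner_sub_left, hxy, sub_eq_zero]
  have hspan : affineSpan ℝ {x ∈ V | ⟪x, y₀⟫ = -1} = H := by
    have hK : {x ∈ V | ⟪x, y₀⟫ = -1} = V ∩ H := by ext x; simp [hmemH]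
    rw [hK, affineSpan_inter_eq hx₀ (AffineSubspace.self_mem_mk' x₀ _)]
  have hvH : v +ᵥ x₀ ∈ H := AffineSubspace.vadd_mem_mk' x₀ (by simpa [real_inner_comm] using hv)
  have := hA.1 (by rwa [← hspan] at hvH) (by rw [hspan]; exact AffineSubspace.self_mem_mk' _ _)
    (by rw [A.map_vadd, hAv, zero_vadd])
  simpa using this

lemma injective_coneCoords {V : Set (Euc d)} {x₀ y₀ : Euc d} {A : Euc d →ᵃ[ℝ] Euc n}
    (hA : IsChart {x ∈ V | ⟪x, y₀⟫ = -1} x₀ A) (hx₀ : x₀ ∈ interior V) (hxy : ⟪x₀, y₀⟫ = -1) :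
    Function.Injective (coneCoords A x₀ y₀) := by
  refine (injective_iff_map_eq_zero _).2 fun x hx => ?_
  have hfst : ⟪x, y₀⟫ = 0 := by simpa using congrArg Prod.fst hx
  have hsnd : A.linear x = 0 := by simpa [coneCoords, hfst] using congrArg Prod.snd hx
  exact hA.eq_zero_of_linear_eq_zero hx₀ hxy hfst hsnd

lemma diff_zero_eq_preimage_coneOver {V : Set (Euc d)} {x₀ y₀ : Euc d}
    {A : Euc d →ᵃ[ℝ] Euc n}
    (hcone : ∀ x ∈ V, ∀ t : ℝ, 0 ≤ t → t • x ∈ V) (hy₀ : y₀ ∈ interior (dualConeSet V))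
    (hinj : Function.Injective (coneCoords A x₀ y₀)) (hA : A x₀ = 0) :
    V \ {0} = coneCoords A x₀ y₀ ⁻¹' coneOver (A '' {x ∈ V | ⟪x, y₀⟫ = -1}) := by
  ext x
  constructor
  · rintro ⟨hxV, hx0⟩
    have hneg : ⟪y₀, x⟫ < 0 :=
      inner_neg_of_mem_interior hy₀ (fun w hw => by rw [real_inner_comm]; exact hw x hxV) hx0
    set t := -⟪x, y₀⟫
    have ht : 0 < t := by rw [real_inner_comm] at hneg; linarith
    have hk : ⟪t⁻¹ • x, y₀⟫ = -1 := by
      rw [real_inner_smul_left]; field_simp; ring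
    have hx : x = t • t⁻¹ • x := by rw [smul_smul, mul_inv_cancel₀ ht.ne', one_smul]
    rw [mem_preimage, hx, coneCoords_smul hA hk]
    exact ⟨ht, smul_mem_smul_set (mem_image_of_mem A ⟨hcone x hxV _ (inv_nonneg.2 ht.le), hk⟩)⟩
  · rintro ⟨ht, hu⟩
    obtain ⟨_, ⟨k, ⟨hkV, hk⟩, rfl⟩, hku⟩ := hu
    have hx : x = (coneCoords A x₀ y₀ x).1 • k :=
      hinj (by rw [coneCoords_smul hA hk]; exact Prod.ext rfl hku.symm)
    refine ⟨hx ▸ hcone k hkV _ ht.le, fun hx0 => ?_⟩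
    rw [mem_singleton_iff.1 hx0, map_zero] at ht
    exact lt_irrefl 0 ht

lemma measurableSet_of_diff_zero_eq {V : Set (Euc d)} {S : Set (Euc n)}
    {Φ : Euc d ≃ₗ[ℝ] ℝ × Euc n} (hV : MeasurableSet V) (h : V \ {0} = Φ ⁻¹' coneOver S) :
    MeasurableSet S := by
  have : S = (fun u => Φ.symm (1, u)) ⁻¹' (V \ {0}) := by ext u; simp [h, mem_coneOver]
  rw [this]
  exact (hV.diff (measurableSet_singleton 0)).preimage
    ((LinearMap.continuous_of_finiteDimensional Φ.symm.toLinearMap).measurable.comp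
      (measurable_const.prodMk measurable_id))

lemma dualConeSet_diff_zero_eq {V : Set (Euc d)} {S : Set (Euc n)} {x₀ : Euc d}
    {Φ : Euc d ≃ₗ[ℝ] ℝ × Euc n} {Φ' : Euc d →ₗ[ℝ] ℝ × Euc n}
    (hΦ' : ∀ x y, ⟪x, y⟫ = ⟪(Φ x).2, (Φ' y).2⟫ - (Φ x).1 * (Φ' y).1)
    (hV : V \ {0} = Φ ⁻¹' coneOver S) (hx₀ : x₀ ∈ interior V) (hΦx₀ : Φ x₀ = (1, 0)) :
    dualConeSet V \ {0} = Φ' ⁻¹' coneOver (polarSet S) := by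
  have hfst (y : Euc d) : ⟪x₀, y⟫ = -(Φ' y).1 := by simp [hΦ', hΦx₀]
  have hdual (y : Euc d) : y ∈ dualConeSet V ↔ ∀ u ∈ S, ⟪u, (Φ' y).2⟫ ≤ (Φ' y).1 := by
    constructor
    · intro hy u hu
      have hxV : Φ.symm (1, u) ∈ V \ {0} := by simpa [hV, mem_coneOver] using hu
      have := hy _ hxV.1
      rw [hΦ', LinearEquiv.apply_symm_apply] at this
      linarith
    · intro h x hxV
      rcases eq_or_ne x 0 with rfl | hx0
      · simp
      have hx : Φ x ∈ coneOver S := by rw [← mem_preimage, ← hV]; exact ⟨hxV, hx0⟩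
      obtain ⟨ht, hu⟩ := mem_coneOver.1 hx
      have := h _ hu
      rw [real_inner_smul_left, inv_mul_le_iff₀ ht] at this
      rw [hΦ']
      linarith
  ext y
  rw [Set.mem_sdiff, mem_singleton_iff, hdual, mem_preimage, mem_coneOver]
  constructor
  · rintro ⟨h, hy0⟩
    have hpos : 0 < (Φ' y).1 := by
      have := inner_neg_of_mem_interior hx₀ ((hdual y).2 h) hy0
      linarith [hfst y]
    refine ⟨hpos, fun u hu => ?_⟩
    rw [real_inner_smul_right, inv_mul_le_iff₀ hpos, mul_one]
    exact h u hu
  · rintro ⟨hpos, hw⟩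
    refine ⟨fun u hu => ?_, fun hy0 => ?_⟩
    · have := hw u hu
      rwa [real_inner_smul_right, inv_mul_le_iff₀ hpos, mul_one] at this
    · rw [hy0, map_zero] at hpos
      exact lt_irrefl 0 hpos

theorem mahlerVol_image_section {V : Set (Euc (n + 1))} {x₀ y₀ : Euc (n + 1)} (hcl : IsClosed V)
    (hcone : ∀ x ∈ V, ∀ t : ℝ, 0 ≤ t → t • x ∈ V) (hx₀ : x₀ ∈ interior V)
    (hy₀ : y₀ ∈ interior (dualConeSet V)) (hxy : ⟪x₀, y₀⟫ = -1) {A : Euc (n + 1) →ᵃ[ℝ] Euc n}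
    (hA : IsChart {x ∈ V | ⟪x, y₀⟫ = -1} x₀ A) :
    mahlerVol (A '' {x ∈ V | ⟪x, y₀⟫ = -1}) =
      1 / (n.factorial : ℝ) ^ 2 *
        ((∫ x in V, Real.exp ⟪x, y₀⟫) * ∫ y in dualConeSet V, Real.exp ⟪x₀, y⟫) := by
  set K' := A '' {x ∈ V | ⟪x, y₀⟫ = -1}
  have hinj := injective_coneCoords hA hx₀ hxy
  set Φ := (coneCoords A x₀ y₀).linearEquivOfInjective hinj (by simp [add_comm])
  have hV : V \ {0} = Φ ⁻¹' coneOver K' := diff_zero_eq_preimage_coneOver hcone hy₀ hinj hA.2.2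
  have hΦx₀ : Φ x₀ = (1, 0) := by simpa [Φ, hA.2.2] using coneCoords_smul hA.2.2 hxy 1
  obtain ⟨Φ', hΦ', hdet⟩ := exists_lorentzDual Φ
  have hW := dualConeSet_diff_zero_eq hΦ' hV hx₀ hΦx₀
  have hK' : MeasurableSet K' := measurableSet_of_diff_zero_eq hcl.measurableSet hV
  have hnull (s : Set (Euc (n + 1))) : (s \ {0} : Set (Euc (n + 1))) =ᵐ[volume] s :=
    sdiff_null_ae_eq_self (measure_singleton 0)
  have hIV : ∫ x in V, Real.exp ⟪x, y₀⟫ =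
      |coordDet Φ.toLinearMap|⁻¹ * (n.factorial * (volume K').toReal) := by
    rw [← setIntegral_congr_set (hnull V), hV,
      ← integral_exp_neg_preimage_coneOver _ (coordDet_ne_zero Φ) hK']
    simp [Φ]
  have hIW : ∫ y in dualConeSet V, Real.exp ⟪x₀, y⟫ =
      |coordDet Φ'|⁻¹ * (n.factorial * (volume (polarSet K')).toReal) := by
    rw [← setIntegral_congr_set (hnull _), hW, ← integral_exp_neg_preimage_coneOver _ _
      (isClosed_polarSet K').measurableSet]
    · simp [hΦ', hΦx₀]
    · intro h
      rw [h, abs_zero, mul_zero] at hdet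
      exact zero_ne_one hdet
  have hinv : |coordDet Φ.toLinearMap|⁻¹ * |coordDet Φ'|⁻¹ = 1 := by rw [← mul_inv, hdet, inv_one]
  have hfac : (n.factorial : ℝ) ≠ 0 := by positivity
  rw [mahlerVol, hIV, hIW]
  field_simp
  linear_combination (-(volume K').toReal * (volume (polarSet K')).toReal) * hinv

end ConeMahler

/-- Mahler volumes of dual hyperplane sections of a cone via the
Laplace transform. -/
theorem cone_mahler_formula (n : ℕ) (V : Set (Euc (n + 1))) (hV : IsProperCone V)
    (x₀ y₀ : Euc (n + 1)) (hx₀ : x₀ ∈ interior V)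
    (hy₀ : y₀ ∈ interior (dualConeSet V)) (hxy : (inner ℝ x₀ y₀ : ℝ) = -1) :
    ∀ A B : Euc (n + 1) →ᵃ[ℝ] Euc n,
      IsChart {x ∈ V | (inner ℝ x y₀ : ℝ) = -1} x₀ A →
      IsChart {y ∈ dualConeSet V | (inner ℝ x₀ y : ℝ) = -1} y₀ B →
      mahlerVol (⇑A '' {x ∈ V | (inner ℝ x y₀ : ℝ) = -1}) =
        (1 / (n.factorial : ℝ) ^ 2) *
          ((∫ x in V, Real.exp ((inner ℝ x y₀ : ℝ))) *
            ∫ y in dualConeSet V, Real.exp ((inner ℝ x₀ y : ℝ))) ∧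
      mahlerVol (⇑B '' {y ∈ dualConeSet V | (inner ℝ x₀ y : ℝ) = -1}) =
        (1 / (n.factorial : ℝ) ^ 2) *
          ((∫ x in V, Real.exp ((inner ℝ x y₀ : ℝ))) *
            ∫ y in dualConeSet V, Real.exp ((inner ℝ x₀ y : ℝ))) := by
  intro A B hA hB
  obtain ⟨hcl, hconv, hcone, -, -⟩ := hV
  have hbip := ConeMahler.dualConeSet_dualConeSet hcl hconv hcone ⟨x₀, interior_subset hx₀⟩
  refine ⟨ConeMahler.mahlerVol_image_section hcl hcone hx₀ hy₀ hxy hA, ?_⟩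
  have hdual := ConeMahler.mahlerVol_image_section (ConeMahler.isClosed_dualConeSet V)
    (fun y hy t ht => ConeMahler.smul_mem_dualConeSet hy ht) hy₀ (hbip.symm ▸ hx₀)
    (by rwa [real_inner_comm]) (A := B) (by simpa only [real_inner_comm x₀] using hB)
  simp only [hbip, real_inner_comm x₀, ← real_inner_comm y₀] at hdual
  rw [hdual, mul_comm (∫ y in dualConeSet V, _)]
end
end

section
/- Let V ⊂ ℝ^{n+1} be a proper convex cone and let y be in the interior of V*. Then ∇Φ_V(y + V*) ⊆ (n+1)·C_y, where C_y = {x ∈ V : ⟨x, y⟩ ≥ −1} is the truncated cone; that is, for every z ∈ y + V* lying in the interior of V*, the point ∇Φ_V(z) belongs to (n+1)·C_y. -/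
open MeasureTheory Set Pointwise

noncomputable section

/-! Let `G = ∇Φ_V(z)`. The transform `Φ_V` decreases along every direction of `V*`, so
`⟪G, w⟫ ≤ 0` for all `w ∈ V*`, and `G ∈ V** = V` by the bipolar theorem. Substituting `x ↦ t • x`
gives `Φ_V(t • z) = Φ_V(z) - (n + 1) log t`, and Euler's identity yields `⟪G, z⟫ = -(n + 1)`.
Finally `z - y ∈ V*` gives `⟪G, y⟫ ≥ ⟪G, z⟫ = -(n + 1)`, i.e. `G / (n + 1) ∈ C_y`.
Where `Φ_V` is not differentiable, `gradient` is `0 ∈ (n + 1) • C_y`. -/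

open scoped RealInnerProductSpace

theorem smul_set_eq_of_forall_smul_mem {E : Type*} [AddCommGroup E] [Module ℝ E] {s : Set E}
    (hs : ∀ x ∈ s, ∀ t : ℝ, 0 ≤ t → t • x ∈ s) {t : ℝ} (ht : 0 < t) : t • s = s := by
  refine (smul_set_subset_iff.2 fun x hx => hs x hx t ht.le).antisymm fun x hx => ?_
  rw [mem_smul_set_iff_inv_smul_mem₀ ht.ne']
  exact hs x hx _ (inv_nonneg.2 ht.le)

section HaarIntegrals

variable {E : Type*} [NormedAddCommGroup E] [NormedSpace ℝ E] [FiniteDimensional ℝ E]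
  [MeasurableSpace E] [BorelSpace E] (μ : Measure E) [μ.IsAddHaarMeasure]

theorem integrable_exp_neg_mul_norm {c : ℝ} (hc : 0 < c) :
    Integrable (fun x : E => Real.exp (-(c * ‖x‖))) μ := by
  rcases subsingleton_or_nontrivial E with hE | hE
  · refine (integrable_const (1 : ℝ)).mono' (by fun_prop) (ae_of_all _ fun x => ?_)
    simp [Subsingleton.elim x 0]
  rw [integrable_fun_norm_addHaar μ (f := fun r => Real.exp (-(c * r)))]
  refine (integrableOn_rpow_mul_exp_neg_mul_rpow (s := ((Module.finrank ℝ E - 1 : ℕ) : ℝ))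
    (neg_one_lt_zero.trans_le (Nat.cast_nonneg _)) one_pos hc).congr_fun
    (fun r _ => ?_) measurableSet_Ioi
  simp [Real.rpow_natCast]

theorem setIntegral_comp_smul_of_forall_smul_mem {F : Type*} [NormedAddCommGroup F]
    [NormedSpace ℝ F] (f : E → F) {s : Set E} (hs : ∀ x ∈ s, ∀ t : ℝ, 0 ≤ t → t • x ∈ s)
    {t : ℝ} (ht : 0 < t) :
    ∫ x in s, f (t • x) ∂μ = (t ^ Module.finrank ℝ E)⁻¹ • ∫ x in s, f x ∂μ := by
  rw [Measure.setIntegral_comp_smul_of_pos μ f s ht, smul_set_eq_of_forall_smul_mem hs ht]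

end HaarIntegrals

theorem setIntegral_pos_of_pos {X : Type*} [TopologicalSpace X] [MeasurableSpace X]
    {μ : Measure X} [μ.IsOpenPosMeasure] {f : X → ℝ} {s : Set X} (hf : ∀ x, 0 < f x)
    (hs : (interior s).Nonempty) (hfi : IntegrableOn f s μ) : 0 < ∫ x in s, f x ∂μ := by
  rw [setIntegral_pos_iff_support_of_nonneg_ae (ae_of_all _ fun x => (hf x).le) hfi,
    Function.support_eq_univ fun x => (hf x).ne', univ_inter]
  exact (isOpen_interior.measure_pos μ hs).trans_le (measure_mono interior_subset)

namespace IsProperCone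

variable {d : ℕ} {V : Set (Euc d)}

theorem smul_mem (hV : IsProperCone V) {x : Euc d} (hx : x ∈ V) {t : ℝ} (ht : 0 ≤ t) :
    t • x ∈ V :=
  hV.2.2.1 x hx t ht

theorem measurableSet (hV : IsProperCone V) : MeasurableSet V :=
  hV.1.measurableSet

theorem interior_nonempty (hV : IsProperCone V) : (interior V).Nonempty :=
  hV.2.2.2.1

theorem zero_mem (hV : IsProperCone V) : (0 : Euc d) ∈ V := by
  obtain ⟨x, hx⟩ := hV.interior_nonempty
  simpa using hV.smul_mem (interior_subset hx) le_rfl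

theorem add_mem (hV : IsProperCone V) {x y : Euc d} (hx : x ∈ V) (hy : y ∈ V) : x + y ∈ V := by
  have hmid : (1 / 2 : ℝ) • x + (1 / 2 : ℝ) • y ∈ V := hV.2.1 hx hy (by norm_num) (by norm_num)
    (by norm_num)
  convert hV.smul_mem hmid zero_le_two using 1
  rw [smul_add, smul_smul, smul_smul]
  norm_num

def toProperCone (hV : IsProperCone V) : ProperCone ℝ (Euc d) where
  carrier := V
  add_mem' := hV.add_mem
  zero_mem' := hV.zero_mem
  smul_mem' c _ hx := hV.smul_mem hx c.2
  isClosed' := hV.1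

theorem mem_of_forall_inner_nonpos (hV : IsProperCone V) {x : Euc d}
    (hx : ∀ w ∈ dualConeSet V, ⟪x, w⟫ ≤ 0) : x ∈ V := by
  change x ∈ (hV.toProperCone : Set (Euc d))
  rw [← ProperCone.innerDual_innerDual hV.toProperCone]
  intro u hu
  have hneg : -u ∈ dualConeSet V := fun v hv => by
    rw [inner_neg_right, neg_nonpos]
    exact hu hv
  simpa [real_inner_comm] using hx _ hneg

end IsProperCone

section LaplaceTransform

variable {d : ℕ} {V : Set (Euc d)} {z w : Euc d}

def laplaceTransform (V : Set (Euc d)) (z : Euc d) : ℝ :=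
  ∫ x in V, Real.exp ⟪x, z⟫

theorem logLaplace_eq_log_laplaceTransform (V : Set (Euc d)) (z : Euc d) :
    logLaplace V z = Real.log (laplaceTransform V z) :=
  rfl

theorem smul_mem_dualConeSet (hw : w ∈ dualConeSet V) {t : ℝ} (ht : 0 ≤ t) :
    t • w ∈ dualConeSet V := fun x hx => by
  rw [real_inner_smul_right]
  exact mul_nonpos_of_nonneg_of_nonpos ht (hw x hx)

theorem add_mem_interior_dualConeSet (hz : z ∈ interior (dualConeSet V))
    (hw : w ∈ dualConeSet V) : z + w ∈ interior (dualConeSet V) := by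
  rw [mem_interior_iff_mem_nhds] at hz ⊢
  have hpre : (· - w) ⁻¹' dualConeSet V ∈ nhds (z + w) :=
    (continuous_sub_right w).tendsto' (z + w) z (add_sub_cancel_right z w) hz
  refine Filter.mem_of_superset hpre fun u hu x hx => ?_
  have := add_le_add (hu x hx) (hw x hx)
  rwa [← inner_add_right, sub_add_cancel, add_zero] at this

theorem exists_inner_le_neg_mul_norm (hz : z ∈ interior (dualConeSet V)) :
    ∃ c > 0, ∀ x ∈ V, ⟪x, z⟫ ≤ -(c * ‖x‖) := by
  obtain ⟨ε, hε, hball⟩ := Metric.mem_nhds_iff.1 (mem_interior_iff_mem_nhds.1 hz)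
  refine ⟨ε / 2, half_pos hε, fun x hx => ?_⟩
  rcases eq_or_ne x 0 with rfl | hx0
  · simp
  have hxpos : 0 < ‖x‖ := norm_pos_iff.2 hx0
  have hmem : z + (ε / 2 / ‖x‖) • x ∈ Metric.ball z ε := by
    rw [Metric.mem_ball, dist_self_add_left, norm_smul, Real.norm_of_nonneg (by positivity),
      div_mul_cancel₀ _ hxpos.ne']
    linarith
  have hdual := hball hmem x hx
  rw [inner_add_right, real_inner_smul_right, real_inner_self_eq_norm_sq] at hdual
  have hsq : ε / 2 / ‖x‖ * ‖x‖ ^ 2 = ε / 2 * ‖x‖ := by field_simp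
  linarith

theorem integrableOn_exp_inner (hVm : MeasurableSet V) (hz : z ∈ interior (dualConeSet V)) :
    IntegrableOn (fun x => Real.exp ⟪x, z⟫) V := by
  obtain ⟨c, hc, hle⟩ := exists_inner_le_neg_mul_norm hz
  refine (integrable_exp_neg_mul_norm volume hc).integrableOn.mono' (by fun_prop)
    ((ae_restrict_iff' hVm).2 (ae_of_all _ fun x hx => ?_))
  rw [Real.norm_of_nonneg (Real.exp_pos _).le]
  exact Real.exp_le_exp.2 (hle x hx)

theorem laplaceTransform_pos (hVm : MeasurableSet V) (hVi : (interior V).Nonempty)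
    (hz : z ∈ interior (dualConeSet V)) : 0 < laplaceTransform V z :=
  setIntegral_pos_of_pos (fun _ => Real.exp_pos _) hVi (integrableOn_exp_inner hVm hz)

theorem laplaceTransform_add_le (hVm : MeasurableSet V) (hz : z ∈ interior (dualConeSet V))
    (hw : w ∈ dualConeSet V) : laplaceTransform V (z + w) ≤ laplaceTransform V z :=
  setIntegral_mono_on (integrableOn_exp_inner hVm (add_mem_interior_dualConeSet hz hw))
    (integrableOn_exp_inner hVm hz) hVm fun x hx => by
      rw [Real.exp_le_exp, inner_add_right]
      linarith [hw x hx]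

theorem logLaplace_add_le (hVm : MeasurableSet V) (hVi : (interior V).Nonempty)
    (hz : z ∈ interior (dualConeSet V)) (hw : w ∈ dualConeSet V) :
    logLaplace V (z + w) ≤ logLaplace V z :=
  Real.log_le_log (laplaceTransform_pos hVm hVi (add_mem_interior_dualConeSet hz hw))
    (laplaceTransform_add_le hVm hz hw)

theorem laplaceTransform_smul (hV : ∀ x ∈ V, ∀ t : ℝ, 0 ≤ t → t • x ∈ V) (z : Euc d) {t : ℝ}
    (ht : 0 < t) : laplaceTransform V (t • z) = (t ^ d)⁻¹ * laplaceTransform V z := by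
  have hinner : ∀ x : Euc d, ⟪x, t • z⟫ = ⟪t • x, z⟫ := fun x => by
    rw [real_inner_smul_right, real_inner_smul_left]
  simp_rw [laplaceTransform, hinner]
  rw [setIntegral_comp_smul_of_forall_smul_mem volume (fun x => Real.exp ⟪x, z⟫) hV ht,
    finrank_euclideanSpace_fin, smul_eq_mul]

theorem logLaplace_smul (hV : ∀ x ∈ V, ∀ t : ℝ, 0 ≤ t → t • x ∈ V)
    (hz : 0 < laplaceTransform V z) {t : ℝ} (ht : 0 < t) :
    logLaplace V (t • z) = logLaplace V z - d * Real.log t := by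
  rw [logLaplace_eq_log_laplaceTransform, laplaceTransform_smul hV z ht,
    Real.log_mul (by positivity) hz.ne', Real.log_inv, Real.log_pow,
    logLaplace_eq_log_laplaceTransform]
  ring

theorem inner_gradient_logLaplace_nonpos (hV : IsProperCone V)
    (hz : z ∈ interior (dualConeSet V)) (hdiff : DifferentiableAt ℝ (logLaplace V) z)
    (hw : w ∈ dualConeSet V) : ⟪gradient (logLaplace V) z, w⟫ ≤ 0 := by
  have hmax : IsMaxOn (logLaplace V) (segment ℝ z (z + w)) z := by
    rw [segment_eq_image']
    rintro _ ⟨θ, hθ, rfl⟩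
    rw [add_sub_cancel_left]
    exact logLaplace_add_le hV.measurableSet hV.interior_nonempty hz (smul_mem_dualConeSet hw hθ.1)
  rw [inner_gradient_left]
  exact hmax.localize.hasFDerivWithinAt_nonpos hdiff.hasFDerivAt.hasFDerivWithinAt
    (mem_posTangentConeAt_of_segment_subset subset_rfl)

theorem inner_gradient_logLaplace_self (hV : ∀ x ∈ V, ∀ t : ℝ, 0 ≤ t → t • x ∈ V)
    (hz : 0 < laplaceTransform V z) (hdiff : DifferentiableAt ℝ (logLaplace V) z) :
    ⟪gradient (logLaplace V) z, z⟫ = -d := by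
  have hchain : HasDerivAt (fun t : ℝ => logLaplace V (t • z)) (fderiv ℝ (logLaplace V) z z) 1 :=
    hdiff.hasFDerivAt.comp_hasDerivAt_of_eq 1 (by simpa using (hasDerivAt_id (1 : ℝ)).smul_const z)
      (one_smul ℝ z).symm
  have hlog : HasDerivAt (fun t : ℝ => logLaplace V (t • z)) (-d) 1 := by
    have hrhs : HasDerivAt (fun t => logLaplace V z - d * Real.log t) (-d) 1 := by
      simpa using ((Real.hasDerivAt_log one_ne_zero).const_mul (d : ℝ)).const_sub (logLaplace V z)
    refine hrhs.congr_of_eventuallyEq ?_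
    filter_upwards [Ioi_mem_nhds one_pos] with t ht using logLaplace_smul hV hz ht
  rw [inner_gradient_left, hchain.unique hlog]

end LaplaceTransform

theorem gradient_mapsTo_truncated_cone_general (n : ℕ) (V : Set (Euc (n + 1)))
    (hV : IsProperCone V) (y : Euc (n + 1)) :
    ∀ z ∈ interior (dualConeSet V), z - y ∈ dualConeSet V →
      gradient (logLaplace V) z ∈ ((n : ℝ) + 1) • {x ∈ V | -1 ≤ (inner ℝ x y : ℝ)} := by
  intro z hz hzy
  by_cases hdiff : DifferentiableAt ℝ (logLaplace V) z
  swap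
  · rw [gradient_eq_zero_of_not_differentiableAt hdiff]
    exact ⟨0, ⟨hV.zero_mem, by simp⟩, smul_zero _⟩
  set G := gradient (logLaplace V) z
  have hGV : G ∈ V :=
    hV.mem_of_forall_inner_nonpos fun w hw => inner_gradient_logLaplace_nonpos hV hz hdiff hw
  have hGz : ⟪G, z⟫ = -((n : ℝ) + 1) := by
    rw [inner_gradient_logLaplace_self hV.2.2.1
      (laplaceTransform_pos hV.measurableSet hV.interior_nonempty hz) hdiff]
    push_cast
    ring
  have hGy : -((n : ℝ) + 1) ≤ ⟪G, y⟫ := by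
    have := hzy G hGV
    rw [inner_sub_right] at this
    linarith
  refine ⟨((n : ℝ) + 1)⁻¹ • G, ⟨hV.smul_mem hGV (by positivity), ?_⟩,
    smul_inv_smul₀ (by positivity) G⟩
  rw [real_inner_smul_left, le_inv_mul_iff₀ (by positivity)]
  linarith

/-- `∇Φ_V(y + V*) ⊆ (n+1)·C_y`. -/
theorem gradient_mapsTo_truncated_cone (n : ℕ) (V : Set (Euc (n + 1)))
    (hV : IsProperCone V) (y : Euc (n + 1)) (hy : y ∈ interior (dualConeSet V)) :
    ∀ z ∈ interior (dualConeSet V), z - y ∈ dualConeSet V →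
      gradient (logLaplace V) z ∈ ((n : ℝ) + 1) • {x ∈ V | -1 ≤ (inner ℝ x y : ℝ)} :=
  gradient_mapsTo_truncated_cone_general n V hV y
end
end
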